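/- For Δ > 0, d > 0, R > 0, and all l ≥ (2R + d)/Δ, the quantity (R + (1 + Δ/2)l)² / ((Δ/2)(Δl − 2R))² is at most (1/Δ⁴)(4(Δ+1)(R/d) + Δ + 2)², with equality at l = (2R + d)/Δ. -/

import Mathlib

/-- Second case in the proof of Lemma 2: for all `l ≥ (2R + d)/Δ`, the packing
ratio `(R + (1 + Δ/2)l)² / ((Δ/2)(Δl − 2R))²` is at most
`(1/Δ⁴)(4(Δ+1)(R/d) + Δ + 2)²`, with equality at `l = (2R + d)/Δ`. -/
theorem packing_bound_second_case
    (Δ d R : ℝ) (hΔ : 0 < Δ) (hd : 0 < d) (hR : 0 < R) :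
    (∀ l : ℝ, (2 * R + d) / Δ ≤ l →
      (R + (1 + Δ / 2) * l) ^ 2 / (Δ / 2 * (Δ * l - 2 * R)) ^ 2
        ≤ 1 / Δ ^ 4 * (4 * (Δ + 1) * (R / d) + Δ + 2) ^ 2) ∧
    (R + (1 + Δ / 2) * ((2 * R + d) / Δ)) ^ 2
        / (Δ / 2 * (Δ * ((2 * R + d) / Δ) - 2 * R)) ^ 2
      = 1 / Δ ^ 4 * (4 * (Δ + 1) * (R / d) + Δ + 2) ^ 2 := by
  have hd' : d ≠ 0 := hd.ne'
  have hΔ' : Δ ≠ 0 := hΔ.ne'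
  have hRHS : 1 / Δ ^ 4 * (4 * (Δ + 1) * (R / d) + Δ + 2) ^ 2
      = (4 * (Δ + 1) * R + (Δ + 2) * d) ^ 2 / (Δ ^ 2 * d) ^ 2 := by
    field_simp
    ring
  constructor
  · intro l hl
    have hΔl : 2 * R + d ≤ Δ * l := by
      have := (div_le_iff₀ hΔ).mp hl
      linarith [this]
    have hB : 0 < Δ / 2 * (Δ * l - 2 * R) := by nlinarith
    have hA : 0 < R + (1 + Δ / 2) * l := by nlinarith
    have hK : (R + (1 + Δ / 2) * l) * (Δ ^ 2 * d)
        ≤ (4 * (Δ + 1) * R + (Δ + 2) * d) * (Δ / 2 * (Δ * l - 2 * R)) := by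
      nlinarith [mul_pos hΔ hR, mul_pos (mul_pos hΔ hΔ) hR]
    have hsq := mul_self_le_mul_self
      (by positivity : (0:ℝ) ≤ (R + (1 + Δ / 2) * l) * (Δ ^ 2 * d)) hK
    rw [hRHS, div_le_div_iff₀ (by positivity) (by positivity)]
    nlinarith [hsq]
  · rw [hRHS]
    have h1 : Δ * ((2 * R + d) / Δ) - 2 * R = d := by field_simp; ring
    rw [h1]
    field_simp
    ring
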